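/- arXiv:math/0310430 — 4 statements merged into one kernel-verified Lean document; each statement's English description precedes it below -/
import Mathlib

section
/- Let n ≥ 3, l ≥ 1, and let b = (x_1,…,x_n, x_0, x̄_n,…,x̄_1) be an element of the level-l B_n^{(1)} perfect crystal B_l. Then ε_0(b) + ε_1(b) + 2·Σ_{i=2}^{n−1} ε_i(b) + ε_n(b) ≥ l, and likewise φ_0(b) + φ_1(b) + 2·Σ_{i=2}^{n−1} φ_i(b) + φ_n(b) ≥ l. (This is the perfectness condition ⟨c, ε(b)⟩ ≥ l.) -/
def phi0 (x xb : ℕ → ℕ) : ℕ := xb 1 + (xb 2 - x 2)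
def eps0 (x xb : ℕ → ℕ) : ℕ := x 1 + (x 2 - xb 2)
def phiMid (x xb : ℕ → ℕ) (i : ℕ) : ℕ := x i + (xb (i + 1) - x (i + 1))
def epsMid (x xb : ℕ → ℕ) (i : ℕ) : ℕ := xb i + (x (i + 1) - xb (i + 1))
def phiN (n : ℕ) (x : ℕ → ℕ) (x0 : ℕ) : ℕ := 2 * x n + x0
def epsN (n : ℕ) (xb : ℕ → ℕ) (x0 : ℕ) : ℕ := 2 * xb n + x0

/-!
The term `(x_i - x̄_i)₊` of `ε_{i-1}` and the term `x̄_i` of `ε_i` add up to `max(x_i, x̄_i)`, so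
`⟨c, ε(b)⟩ = x_0 + x_1 + x̄_1 + 2 Σ_{i=2}^n max(x_i, x̄_i) ≥ l`. Swapping `x` and `x̄` exchanges `ε`
and `φ`, which gives the second inequality.
-/

open Finset

theorem Finset.sum_Icc_add_one_top_eq_add_sum_shift {M : Type*} [AddCommMonoid M] (f : ℕ → M)
    {a b : ℕ} (h : a ≤ b + 1) :
    ∑ i ∈ Icc a (b + 1), f i = f a + ∑ i ∈ Icc a b, f (i + 1) := by
  rw [← add_sum_Ioc_eq_sum_Icc h, ← Icc_add_one_left_eq_Ioc, ← map_add_right_Icc, sum_map]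
  rfl

theorem sum_epsMid_telescope (x xb : ℕ → ℕ) {m : ℕ} (hm : 1 ≤ m) :
    (x 2 - xb 2) + ∑ i ∈ Icc 2 m, epsMid x xb i + xb (m + 1)
      = ∑ i ∈ Icc 2 (m + 1), max (xb i) (x i) := by
  simp only [epsMid, ← add_tsub_eq_max, sum_add_distrib,
    sum_Icc_add_one_top_eq_add_sum_shift (fun i ↦ x i - xb i) (by omega : 2 ≤ m + 1),
    sum_Icc_succ_top (by omega : 2 ≤ m + 1) xb]
  ring

theorem level_le_eps_pairing (x xb : ℕ → ℕ) (x0 : ℕ) {n : ℕ} (hn : 2 ≤ n) :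
    x0 + ∑ i ∈ Icc 1 n, (x i + xb i) ≤
      eps0 x xb + epsMid x xb 1 + 2 * ∑ i ∈ Icc 2 (n - 1), epsMid x xb i + epsN n xb x0 := by
  obtain ⟨m, rfl⟩ : ∃ m, n = m + 1 := ⟨n - 1, by omega⟩
  have htele := sum_epsMid_telescope x xb (by omega : 1 ≤ m)
  have hmax : ∑ i ∈ Icc 2 (m + 1), (x i + xb i) ≤ 2 * ∑ i ∈ Icc 2 (m + 1), max (xb i) (x i) := by
    rw [mul_sum]
    exact sum_le_sum fun i _ ↦ by omega
  rw [← add_sum_Ioc_eq_sum_Icc (by omega : 1 ≤ m + 1), ← Icc_add_one_left_eq_Ioc]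
  simp only [eps0, epsMid, epsN, Nat.add_sub_cancel, Nat.reduceAdd] at htele ⊢
  omega

theorem level_le_phi_pairing (x xb : ℕ → ℕ) (x0 : ℕ) {n : ℕ} (hn : 2 ≤ n) :
    x0 + ∑ i ∈ Icc 1 n, (x i + xb i) ≤
      phi0 x xb + phiMid x xb 1 + 2 * ∑ i ∈ Icc 2 (n - 1), phiMid x xb i + phiN n x x0 := by
  have h := level_le_eps_pairing xb x x0 hn
  rw [sum_congr rfl fun i _ ↦ add_comm (xb i) (x i)] at h
  exact h

theorem stmt_5_general (n l : ℕ) (hn : 3 ≤ n)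
    (x xb : ℕ → ℕ) (x0 : ℕ)
    (hsum : x0 + ∑ i ∈ Finset.Icc 1 n, (x i + xb i) = l) :
    (eps0 x xb + epsMid x xb 1 + 2 * ∑ i ∈ Finset.Icc 2 (n - 1), epsMid x xb i
        + epsN n xb x0 ≥ l) ∧
    (phi0 x xb + phiMid x xb 1 + 2 * ∑ i ∈ Finset.Icc 2 (n - 1), phiMid x xb i
        + phiN n x x0 ≥ l) := by
  subst hsum
  exact ⟨level_le_eps_pairing x xb x0 (by omega), level_le_phi_pairing x xb x0 (by omega)⟩

theorem stmt_5 (n l : ℕ) (hn : 3 ≤ n) (hl : 1 ≤ l)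
    (x xb : ℕ → ℕ) (x0 : ℕ) (hx0 : x0 ≤ 1)
    (hsum : x0 + ∑ i ∈ Finset.Icc 1 n, (x i + xb i) = l) :
    (eps0 x xb + epsMid x xb 1 + 2 * ∑ i ∈ Finset.Icc 2 (n - 1), epsMid x xb i
        + epsN n xb x0 ≥ l) ∧
    (phi0 x xb + phiMid x xb 1 + 2 * ∑ i ∈ Finset.Icc 2 (n - 1), phiMid x xb i
        + phiN n x x0 ≥ l) :=
  stmt_5_general n l hn x xb x0 hsum
end

section
/- Let n ≥ 3 and let (y_1,…,y_n, y_0, ȳ_n,…,ȳ_1) be nonnegative integers with y_1·ȳ_1 = 0 and y_0 + Σ_{i=1}^n (y_i + ȳ_i) = l. Define x_1 = y_1 + min(y_2, ȳ_2); x_i = (y_i − ȳ_i)_+ + min(y_{i+1}, ȳ_{i+1}) for 2 ≤ i ≤ n−1; x_n = (y_n − ȳ_n)_+ + ⌊y_0/2⌋; x_0 = y_0 − 2⌊y_0/2⌋; x̄_n = (ȳ_n − y_n)_+ + ⌊y_0/2⌋; x̄_i = (ȳ_i − y_i)_+ + min(y_{i+1}, ȳ_{i+1}) for 2 ≤ i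 ≤ n−1; x̄_1 = ȳ_1 + min(y_2, ȳ_2). Then applying the 'prime' map to (x_1,…,x_n, x_0, x̄_n,…,x̄_1) — namely x'_1 = (x_1 − x̄_1)_+, x'_i = (x_i − x̄_i)_+ + min(x_{i−1}, x̄_{i−1}) for 2 ≤ i ≤ n, x'_0 = x_0 + 2·min(x_n, x̄_n), x̄'_i = (x̄_i − x_i)_+ + min(x_{i−1}, x̄_{i−1}) for 2 ≤ i ≤ n, x̄'_1 = (x̄_1 − x_1)_+ — recovers the original tuple: x'_i = y_i and x̄'_i = ȳ_i for 1 ≤ i ≤ n, and x'_0 = y_0. (That is, ψ ∘ φ = id for type B_n^{(1)}.) -/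
/-!
For `1 ≤ i ≤ n`, `φ` produces `x_i = (y_i - ȳ_i)_+ + c_i` and `x̄_i = (ȳ_i - y_i)_+ + c_i` with a
common summand `c_i` (`phiMapShift`; at `i = 1` this uses `y_1 ȳ_1 = 0`). One of the two truncated
differences vanishes, so `(x_i - x̄_i)_+ = (y_i - ȳ_i)_+` and `min (x_i, x̄_i) = c_i`. Since
`c_{i-1} = min (y_i, ȳ_i)` and `c_n = ⌊y_0/2⌋`, `ψ` adds back exactly what `φ` split off:
`(y_i - ȳ_i)_+ + min (y_i, ȳ_i) = y_i` and `y_0 - 2⌊y_0/2⌋ + 2⌊y_0/2⌋ = y_0`.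
-/

/-- The primed coordinate `x'_i` of the map `ψ` for type `B_n^{(1)}`. -/
def xprime (x xb : ℕ → ℕ) (i : ℕ) : ℕ :=
  if i = 1 then x 1 - xb 1 else (x i - xb i) + min (x (i - 1)) (xb (i - 1))

def xbprime (x xb : ℕ → ℕ) (i : ℕ) : ℕ :=
  if i = 1 then xb 1 - x 1 else (xb i - x i) + min (x (i - 1)) (xb (i - 1))

def x0prime (n : ℕ) (x xb : ℕ → ℕ) (x0 : ℕ) : ℕ := x0 + 2 * min (x n) (xb n)

/-- The coordinate `x_i` of the map `φ` for type `B_n^{(1)}` applied to `(y, y₀, ȳ)`. -/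
def phiMapX (n : ℕ) (y yb : ℕ → ℕ) (y0 : ℕ) (i : ℕ) : ℕ :=
  if i = 1 then y 1 + min (y 2) (yb 2)
  else if i = n then (y n - yb n) + y0 / 2
  else (y i - yb i) + min (y (i + 1)) (yb (i + 1))

def phiMapXb (n : ℕ) (y yb : ℕ → ℕ) (y0 : ℕ) (i : ℕ) : ℕ :=
  if i = 1 then yb 1 + min (y 2) (yb 2)
  else if i = n then (yb n - y n) + y0 / 2
  else (yb i - y i) + min (y (i + 1)) (yb (i + 1))

def phiMapX0 (y0 : ℕ) : ℕ := y0 - 2 * (y0 / 2)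

section TsubSwap

variable {α : Type*} [AddCommMonoid α] [LinearOrder α] [CanonicallyOrderedAdd α] [Sub α]
  [OrderedSub α]

theorem min_tsub_tsub_swap (a b : α) : min (a - b) (b - a) = 0 := by
  rcases le_total a b with h | h <;> simp [tsub_eq_zero_of_le h]

theorem tsub_tsub_tsub_swap (a b : α) : a - b - (b - a) = a - b := by
  rcases le_total a b with h | h <;> simp [tsub_eq_zero_of_le h]

theorem min_tsub_add_tsub_swap_add (a b c : α) : min (a - b + c) (b - a + c) = c := by
  rw [min_add_add_right, min_tsub_tsub_swap, zero_add]

theorem tsub_add_tsub_swap_add [AddLeftReflectLE α] (a b c : α) :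
    (a - b + c) - (b - a + c) = a - b := by
  rw [add_tsub_add_eq_tsub_right, tsub_tsub_tsub_swap]

end TsubSwap

theorem Nat.sub_eq_self_of_mul_eq_zero {a b : ℕ} (h : a * b = 0) : a - b = a := by
  rcases Nat.mul_eq_zero.mp h with rfl | rfl <;> simp

def phiMapShift (n : ℕ) (y yb : ℕ → ℕ) (y0 i : ℕ) : ℕ :=
  if i = n then y0 / 2 else min (y (i + 1)) (yb (i + 1))

theorem xbprime_eq_xprime_swap (x xb : ℕ → ℕ) : xbprime x xb = xprime xb x := by
  ext i
  simp only [xbprime, xprime, min_comm]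

theorem phiMapXb_eq_phiMapX_swap (n : ℕ) (y yb : ℕ → ℕ) (y0 : ℕ) :
    phiMapXb n y yb y0 = phiMapX n yb y y0 := by
  ext i
  simp only [phiMapXb, phiMapX, min_comm]

theorem phiMapShift_swap (n : ℕ) (y yb : ℕ → ℕ) (y0 : ℕ) :
    phiMapShift n yb y y0 = phiMapShift n y yb y0 := by
  ext i
  simp only [phiMapShift, min_comm]

section PhiMap

variable {n : ℕ} {y yb : ℕ → ℕ} (y0 : ℕ)

theorem phiMapX_eq (hn : n ≠ 1) (hy1 : y 1 * yb 1 = 0) (i : ℕ) :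
    phiMapX n y yb y0 i = (y i - yb i) + phiMapShift n y yb y0 i := by
  rcases eq_or_ne i 1 with rfl | hi1
  · simp only [phiMapX, phiMapShift, if_pos, Ne.symm hn, if_false,
      Nat.sub_eq_self_of_mul_eq_zero hy1]
  · rw [phiMapX, phiMapShift, if_neg hi1]
    split_ifs with hin
    · rw [hin]
    · rfl

theorem phiMapXb_eq (hn : n ≠ 1) (hy1 : y 1 * yb 1 = 0) (i : ℕ) :
    phiMapXb n y yb y0 i = (yb i - y i) + phiMapShift n y yb y0 i := by
  rw [phiMapXb_eq_phiMapX_swap, phiMapX_eq y0 hn (by rwa [mul_comm]), phiMapShift_swap]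

theorem phiMapShift_pred {i : ℕ} (hi : 1 ≤ i) (hin : i ≤ n) :
    phiMapShift n y yb y0 (i - 1) = min (y i) (yb i) := by
  rw [phiMapShift, if_neg (by omega), Nat.sub_add_cancel hi]

theorem min_phiMapX_phiMapXb (hn : n ≠ 1) (hy1 : y 1 * yb 1 = 0) (i : ℕ) :
    min (phiMapX n y yb y0 i) (phiMapXb n y yb y0 i) = phiMapShift n y yb y0 i := by
  rw [phiMapX_eq y0 hn hy1, phiMapXb_eq y0 hn hy1, min_tsub_add_tsub_swap_add]

theorem xprime_phiMap (hn : n ≠ 1) (hy1 : y 1 * yb 1 = 0) {i : ℕ} (hi : 1 ≤ i) (hin : i ≤ n) :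
    xprime (phiMapX n y yb y0) (phiMapXb n y yb y0) i = y i := by
  have hdiff : phiMapX n y yb y0 i - phiMapXb n y yb y0 i = y i - yb i := by
    rw [phiMapX_eq y0 hn hy1, phiMapXb_eq y0 hn hy1, tsub_add_tsub_swap_add]
  rw [xprime]
  split_ifs with hi1
  · subst hi1
    rw [hdiff, Nat.sub_eq_self_of_mul_eq_zero hy1]
  · rw [hdiff, min_phiMapX_phiMapXb y0 hn hy1, phiMapShift_pred y0 hi hin, tsub_add_min]

theorem xbprime_phiMap (hn : n ≠ 1) (hy1 : y 1 * yb 1 = 0) {i : ℕ} (hi : 1 ≤ i) (hin : i ≤ n) :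
    xbprime (phiMapX n y yb y0) (phiMapXb n y yb y0) i = yb i := by
  have h := xprime_phiMap (y := yb) (yb := y) y0 hn (by rwa [mul_comm]) hi hin
  rwa [phiMapXb_eq_phiMapX_swap n yb y, ← phiMapXb_eq_phiMapX_swap n y yb,
    ← xbprime_eq_xprime_swap] at h

theorem x0prime_phiMap (hn : n ≠ 1) (hy1 : y 1 * yb 1 = 0) :
    x0prime n (phiMapX n y yb y0) (phiMapXb n y yb y0) (phiMapX0 y0) = y0 := by
  rw [x0prime, min_phiMapX_phiMapXb y0 hn hy1, phiMapShift, if_pos rfl, phiMapX0,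
    Nat.sub_add_cancel (Nat.mul_div_le y0 2)]

end PhiMap

theorem stmt_12_general (n : ℕ) (hn : 3 ≤ n)
    (y yb : ℕ → ℕ) (y0 : ℕ) (hy1 : y 1 * yb 1 = 0) :
    (∀ i, 1 ≤ i → i ≤ n →
      xprime (phiMapX n y yb y0) (phiMapXb n y yb y0) i = y i ∧
      xbprime (phiMapX n y yb y0) (phiMapXb n y yb y0) i = yb i) ∧
    x0prime n (phiMapX n y yb y0) (phiMapXb n y yb y0) (phiMapX0 y0) = y0 := by
  have hn1 : n ≠ 1 := by omega
  exact ⟨fun i hi hin => ⟨xprime_phiMap y0 hn1 hy1 hi hin, xbprime_phiMap y0 hn1 hy1 hi hin⟩,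
    x0prime_phiMap y0 hn1 hy1⟩

theorem stmt_12 (n l : ℕ) (hn : 3 ≤ n)
    (y yb : ℕ → ℕ) (y0 : ℕ) (hy1 : y 1 * yb 1 = 0)
    (hsum : y0 + ∑ i ∈ Finset.Icc 1 n, (y i + yb i) = l) :
    (∀ i, 1 ≤ i → i ≤ n →
      xprime (phiMapX n y yb y0) (phiMapXb n y yb y0) i = y i ∧
      xbprime (phiMapX n y yb y0) (phiMapXb n y yb y0) i = yb i) ∧
    x0prime n (phiMapX n y yb y0) (phiMapXb n y yb y0) (phiMapX0 y0) = y0 :=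
  stmt_12_general n hn y yb y0 hy1
end

section
/- Let n ≥ 3 and let b = (x_1,…,x_n, x_0, x̄_n,…,x̄_1) be an element of the level-l B_n^{(1)} perfect crystal with x_1 < x̄_1 and x_2 ≥ x̄_2. Let b' = f̃_0(b) = (x_1, x_2+1, x_3,…,x_n | x_0 | x̄_n,…,x̄_2, x̄_1−1). Then the primed coordinates of b' relate to those of b as follows: x'_1(b') = x'_1(b), x'_2(b') = x'_2(b) + 1, x̄'_1(b') = x̄'_1(b) − 1, and all other primed coordinates coincide: x'_i(b') = x'_i(b) for 3 ≤ i ≤ n, x'_0(b') = x'_0(b), x̄'_i(b') = x̄'_i(b) for 2 ≤ i ≤ n. (This is the compatibility ψ(f̃_0 b) = f̃_0 ψ(b) in this case.) -/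
section Unfold

variable (x xb : ℕ → ℕ)

theorem xprime_one : xprime x xb 1 = x 1 - xb 1 := if_pos rfl

theorem xprime_of_ne_one {i : ℕ} (hi : i ≠ 1) :
    xprime x xb i = (x i - xb i) + min (x (i - 1)) (xb (i - 1)) := if_neg hi

theorem xbprime_one : xbprime x xb 1 = xb 1 - x 1 := if_pos rfl

theorem xbprime_of_ne_one {i : ℕ} (hi : i ≠ 1) :
    xbprime x xb i = (xb i - x i) + min (x (i - 1)) (xb (i - 1)) := if_neg hi

end Unfold

section FZero

variable {x xb : ℕ → ℕ}

theorem min_update_fZero (h1 : x 1 < xb 1) (h2 : xb 2 ≤ x 2) (j : ℕ) :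
    min (Function.update x 2 (x 2 + 1) j) (Function.update xb 1 (xb 1 - 1) j) =
      min (x j) (xb j) := by
  simp only [Function.update_apply]
  split_ifs <;> subst_vars <;> omega

theorem tsub_update_fZero (h1 : x 1 < xb 1) (h2 : xb 2 ≤ x 2) (j : ℕ) :
    Function.update x 2 (x 2 + 1) j - Function.update xb 1 (xb 1 - 1) j =
      x j - xb j + if j = 2 then 1 else 0 := by
  simp only [Function.update_apply]
  split_ifs <;> subst_vars <;> omega

theorem tsub_update_fZero_symm (h2 : xb 2 ≤ x 2) (j : ℕ) :
    Function.update xb 1 (xb 1 - 1) j - Function.update x 2 (x 2 + 1) j =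
      xb j - x j - if j = 1 then 1 else 0 := by
  simp only [Function.update_apply]
  split_ifs <;> subst_vars <;> omega

theorem xprime_update_fZero (h1 : x 1 < xb 1) (h2 : xb 2 ≤ x 2) (i : ℕ) :
    xprime (Function.update x 2 (x 2 + 1)) (Function.update xb 1 (xb 1 - 1)) i =
      xprime x xb i + if i = 2 then 1 else 0 := by
  rcases eq_or_ne i 1 with rfl | hi
  · simp only [xprime_one, tsub_update_fZero h1 h2]
  · rw [xprime_of_ne_one _ _ hi, xprime_of_ne_one _ _ hi, tsub_update_fZero h1 h2,
      min_update_fZero h1 h2]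
    ring

theorem xbprime_update_fZero (h1 : x 1 < xb 1) (h2 : xb 2 ≤ x 2) (i : ℕ) :
    xbprime (Function.update x 2 (x 2 + 1)) (Function.update xb 1 (xb 1 - 1)) i =
      xbprime x xb i - if i = 1 then 1 else 0 := by
  rcases eq_or_ne i 1 with rfl | hi
  · simp only [xbprime_one, tsub_update_fZero_symm h2, if_true]
  · rw [xbprime_of_ne_one _ _ hi, xbprime_of_ne_one _ _ hi, tsub_update_fZero_symm h2,
      min_update_fZero h1 h2, if_neg hi, tsub_zero, tsub_zero]

theorem x0prime_update_fZero (h1 : x 1 < xb 1) (h2 : xb 2 ≤ x 2) (n x0 : ℕ) :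
    x0prime n (Function.update x 2 (x 2 + 1)) (Function.update xb 1 (xb 1 - 1)) x0 =
      x0prime n x xb x0 := by
  simp only [x0prime, min_update_fZero h1 h2]

end FZero

theorem stmt_15_general (n : ℕ)
    (x xb : ℕ → ℕ) (x0 : ℕ)
    (h1 : x 1 < xb 1) (h2 : xb 2 ≤ x 2)
    -- `b' = f̃₀(b)`: replace `x₂` by `x₂ + 1` and `x̄₁` by `x̄₁ - 1`
    (x' xb' : ℕ → ℕ)
    (hx' : x' = Function.update x 2 (x 2 + 1))
    (hxb' : xb' = Function.update xb 1 (xb 1 - 1)) :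
    xprime x' xb' 1 = xprime x xb 1 ∧
    xprime x' xb' 2 = xprime x xb 2 + 1 ∧
    xbprime x' xb' 1 = xbprime x xb 1 - 1 ∧
    (∀ i, 3 ≤ i → i ≤ n → xprime x' xb' i = xprime x xb i) ∧
    x0prime n x' xb' x0 = x0prime n x xb x0 ∧
    (∀ i, 2 ≤ i → i ≤ n → xbprime x' xb' i = xbprime x xb i) := by
  subst hx' hxb'
  refine ⟨?_, ?_, ?_, fun i hi _ => ?_, x0prime_update_fZero h1 h2 n x0, fun i hi _ => ?_⟩
  · simp [xprime_update_fZero h1 h2]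
  · simp [xprime_update_fZero h1 h2]
  · simp [xbprime_update_fZero h1 h2]
  · simp [xprime_update_fZero h1 h2, show i ≠ 2 by omega]
  · simp [xbprime_update_fZero h1 h2, show i ≠ 1 by omega]

theorem stmt_15 (n l : ℕ) (hn : 3 ≤ n)
    (x xb : ℕ → ℕ) (x0 : ℕ) (hx0 : x0 ≤ 1)
    (hsum : x0 + ∑ i ∈ Finset.Icc 1 n, (x i + xb i) = l)
    (h1 : x 1 < xb 1) (h2 : xb 2 ≤ x 2)
    -- `b' = f̃₀(b)`: replace `x₂` by `x₂ + 1` and `x̄₁` by `x̄₁ - 1`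
    (x' xb' : ℕ → ℕ)
    (hx' : x' = Function.update x 2 (x 2 + 1))
    (hxb' : xb' = Function.update xb 1 (xb 1 - 1)) :
    xprime x' xb' 1 = xprime x xb 1 ∧
    xprime x' xb' 2 = xprime x xb 2 + 1 ∧
    xbprime x' xb' 1 = xbprime x xb 1 - 1 ∧
    (∀ i, 3 ≤ i → i ≤ n → xprime x' xb' i = xprime x xb i) ∧
    x0prime n x' xb' x0 = x0prime n x xb x0 ∧
    (∀ i, 2 ≤ i → i ≤ n → xbprime x' xb' i = xbprime x xb i) :=
  stmt_15_general n x xb x0 h1 h2 x' xb' hx' hxb'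
end

section
/- Let n ≥ 3, l ≥ 1, and let a_0, a_1, …, a_n be nonnegative integers satisfying a_0 + a_1 + 2·Σ_{i=2}^{n−1} a_i + a_n = l. Then there exists a unique element b = (x_1,…,x_n, x_0, x̄_n,…,x̄_1) of the level-l B_n^{(1)} perfect crystal B_l such that φ_i(b) = a_i for all 0 ≤ i ≤ n. (This is the existence and uniqueness of the element b_λ with φ(b_λ) = λ in the definition of a perfect crystal.) -/
/-- `φ_i(b)` (`0 ≤ i ≤ n`) for a `B_n^{(1)}` crystal element `(x, x₀, x̄)`. -/
def Phi (n : ℕ) (x xb : ℕ → ℕ) (x0 : ℕ) (i : ℕ) : ℕ :=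
  if i = 0 then xb 1 + (xb 2 - x 2)
  else if i = n then 2 * x n + x0
  else x i + (xb (i + 1) - x (i + 1))

private lemma icc_split_bot (n : ℕ) (hn : 1 ≤ n) (f : ℕ → ℕ) :
    ∑ i ∈ Finset.Icc 1 n, f i = f 1 + ∑ i ∈ Finset.Icc 2 n, f i := by
  rw [Finset.Icc_eq_cons_Ioc hn, Finset.sum_cons, ← Finset.Icc_add_one_left_eq_Ioc]
  rfl

private lemma icc_split_bot2 (n : ℕ) (hn : 2 ≤ n) (f : ℕ → ℕ) :
    ∑ i ∈ Finset.Icc 2 n, f i = f 2 + ∑ i ∈ Finset.Icc 3 n, f i := by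
  rw [Finset.Icc_eq_cons_Ioc hn, Finset.sum_cons, ← Finset.Icc_add_one_left_eq_Ioc]
  rfl

private lemma icc_split_top (n : ℕ) (hn : 3 ≤ n) (f : ℕ → ℕ) :
    ∑ i ∈ Finset.Icc 2 n, f i = (∑ i ∈ Finset.Icc 2 (n - 1), f i) + f n := by
  have h : n = (n - 1) + 1 := by omega
  nth_rewrite 1 [h]
  rw [Finset.sum_Icc_succ_top (by omega), ← h]

private lemma icc_reindex (n : ℕ) (hn : 3 ≤ n) (f : ℕ → ℕ) :
    ∑ i ∈ Finset.Icc 2 (n - 1), f (i + 1) = ∑ i ∈ Finset.Icc 3 n, f i := by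
  have h : Finset.Icc 3 n = (Finset.Icc 2 (n - 1)).map (addRightEmbedding 1) := by
    rw [Finset.map_add_right_Icc]
    congr 1
    omega
  rw [h, Finset.sum_map]
  rfl

private lemma sum_key (n : ℕ) (x xb : ℕ → ℕ)
    (h : ∑ i ∈ Finset.Icc 2 n, xb i
       = ∑ i ∈ Finset.Icc 2 n, (x i + 2 * (xb i - x i))) :
    ∀ i ∈ Finset.Icc 2 n, xb i = x i := by
  intro i hi
  have hle : ∀ j ∈ Finset.Icc 2 n, xb j ≤ x j + 2 * (xb j - x j) := fun j _ => by omega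
  have := (Finset.sum_eq_sum_iff_of_le hle).1 h i hi
  omega

private lemma solution_form (n l : ℕ) (hn : 3 ≤ n) (a : ℕ → ℕ)
    (ha : a 0 + a 1 + 2 * ∑ i ∈ Finset.Icc 2 (n - 1), a i + a n = l)
    (x : ℕ → ℕ) (x0 : ℕ) (xb : ℕ → ℕ)
    (h1 : x0 ≤ 1) (h2 : x0 + ∑ i ∈ Finset.Icc 1 n, (x i + xb i) = l)
    (h3 : ∀ i ≤ n, Phi n x xb x0 i = a i) :
    (∀ i ∈ Finset.Icc 2 n, xb i = x i) ∧
    x 1 = a 1 ∧ xb 1 = a 0 ∧ (∀ i, 2 ≤ i → i ≤ n - 1 → x i = a i) ∧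
    x n = a n / 2 ∧ x0 = a n % 2 := by
  have hpn : 2 * x n + x0 = a n := by
    have := h3 n le_rfl
    simpa [Phi, show n ≠ 0 by omega] using this
  have hp0 : xb 1 + (xb 2 - x 2) = a 0 := by
    have := h3 0 (by omega)
    simpa [Phi] using this
  have hpi : ∀ i, 1 ≤ i → i ≤ n - 1 → x i + (xb (i + 1) - x (i + 1)) = a i := by
    intro i hi1 hi2
    have := h3 i (by omega)
    simpa [Phi, show i ≠ 0 by omega, show i ≠ n by omega] using this
  have hA : ∑ i ∈ Finset.Icc 2 (n - 1), a i
      = (∑ i ∈ Finset.Icc 2 (n - 1), x i)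
        + ∑ i ∈ Finset.Icc 3 n, (xb i - x i) := by
    rw [← icc_reindex n hn (fun i => xb i - x i), ← Finset.sum_add_distrib]
    exact (Finset.sum_congr rfl fun i hi => by
      have := Finset.mem_Icc.1 hi
      exact (hpi i (by omega) (by omega)).symm)
  have hsum1 := icc_split_bot n (by omega) (fun i => x i + xb i)
  have hsum2 := icc_split_top n hn x
  have hsum2' := icc_split_top n hn xb
  have hsplitx := Finset.sum_add_distrib (s := Finset.Icc 2 n) (f := x) (g := xb)
  have hd2 := icc_split_bot2 n (by omega) (fun i => xb i - x i)
  have ha1 : x 1 + (xb 2 - x 2) = a 1 := hpi 1 (by omega) (by omega)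
  have hkey : ∑ i ∈ Finset.Icc 2 n, xb i
      = ∑ i ∈ Finset.Icc 2 n, (x i + 2 * (xb i - x i)) := by
    rw [Finset.sum_add_distrib, ← Finset.mul_sum]
    omega
  have heq := sum_key n x xb hkey
  have hd2z : xb 2 - x 2 = 0 := by
    have := heq 2 (Finset.mem_Icc.2 ⟨le_refl 2, by omega⟩)
    omega
  refine ⟨heq, by omega, by omega, ?_, by omega, by omega⟩
  intro i hi1 hi2
  have h := hpi i (by omega) hi2
  have := heq (i + 1) (Finset.mem_Icc.2 ⟨by omega, by omega⟩)
  omega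

theorem stmt_16 (n l : ℕ) (hn : 3 ≤ n) (hl : 1 ≤ l) (a : ℕ → ℕ)
    (ha : a 0 + a 1 + 2 * ∑ i ∈ Finset.Icc 2 (n - 1), a i + a n = l) :
    ∃ (x : ℕ → ℕ) (x0 : ℕ) (xb : ℕ → ℕ),
      (x0 ≤ 1 ∧ x0 + ∑ i ∈ Finset.Icc 1 n, (x i + xb i) = l ∧
        ∀ i ≤ n, Phi n x xb x0 i = a i) ∧
      ∀ (x' : ℕ → ℕ) (x0' : ℕ) (xb' : ℕ → ℕ),
        (x0' ≤ 1 ∧ x0' + ∑ i ∈ Finset.Icc 1 n, (x' i + xb' i) = l ∧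
          ∀ i ≤ n, Phi n x' xb' x0' i = a i) →
        (∀ i ∈ Finset.Icc 1 n, x' i = x i ∧ xb' i = xb i) ∧ x0' = x0 := by
  set x : ℕ → ℕ := fun i => if i = n then a n / 2 else a i with hx
  set xb : ℕ → ℕ := fun i => if i = 1 then a 0 else if i = n then a n / 2 else a i with hxb
  have hx1 : x 1 = a 1 := by rw [hx]; exact if_neg (by omega)
  have hxb1 : xb 1 = a 0 := by rw [hxb]; exact if_pos rfl
  have hxn : x n = a n / 2 := by rw [hx]; exact if_pos rfl
  have hxbn : xb n = a n / 2 := by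
    rw [hxb]; show (if n = 1 then _ else if n = n then _ else _) = _
    rw [if_neg (show n ≠ 1 by omega), if_pos rfl]
  have hx2 : x 2 = a 2 := by rw [hx]; exact if_neg (by omega)
  have hxb2 : xb 2 = a 2 := by
    rw [hxb]; show (if (2:ℕ) = 1 then _ else if (2:ℕ) = n then _ else _) = _
    rw [if_neg (show (2:ℕ) ≠ 1 by omega), if_neg (show (2:ℕ) ≠ n by omega)]
  have hxmid : ∀ i, i ≠ n → x i = a i := fun i h => by rw [hx]; exact if_neg h
  have hxbmid : ∀ i, i ≠ 1 → i ≠ n → xb i = a i := fun i h1 h2 => by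
    rw [hxb]; show (if i = 1 then _ else if i = n then _ else _) = _
    rw [if_neg h1, if_neg h2]
  refine ⟨x, a n % 2, xb, ⟨by omega, ?_, ?_⟩, ?_⟩
  · rw [icc_split_bot n (by omega), icc_split_top n hn]
    have hmid : ∑ i ∈ Finset.Icc 2 (n - 1), (x i + xb i)
        = ∑ i ∈ Finset.Icc 2 (n - 1), 2 * a i := by
      refine Finset.sum_congr rfl fun i hi => ?_
      have := Finset.mem_Icc.1 hi
      rw [hxmid i (by omega), hxbmid i (by omega) (by omega)]
      ring
    rw [hmid, ← Finset.mul_sum]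
    simp only [hx1, hxb1, hxn, hxbn]
    omega
  · intro i hin
    rcases eq_or_ne i 0 with rfl | hi0
    · unfold Phi
      rw [if_pos rfl, hxb1, hxb2, hx2]
      omega
    rcases eq_or_ne i n with hE | hiN
    · unfold Phi
      rw [if_neg hi0, if_pos hE, hE, hxn]
      omega
    · unfold Phi
      rw [if_neg hi0, if_neg hiN]
      have hxx : xb (i + 1) = x (i + 1) := by
        rcases eq_or_ne (i + 1) n with hE2 | hE2
        · rw [hE2, hxbn, hxn]
        · rw [hxmid _ hE2, hxbmid _ (by omega) hE2]
      rw [hxx, Nat.sub_self, add_zero, hxmid i hiN]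
  · rintro x' x0' xb' ⟨h1', h2', h3'⟩
    obtain ⟨heq, hx1', hxb1', hmid', hxn', hx0'⟩ :=
      solution_form n l hn a ha x' x0' xb' h1' h2' h3'
    refine ⟨?_, hx0'⟩
    intro i hi
    obtain ⟨hi1, hi2⟩ := Finset.mem_Icc.1 hi
    rcases eq_or_ne i 1 with rfl | hne1
    · exact ⟨by rw [hx1', hx1], by rw [hxb1', hxb1]⟩
    rcases eq_or_ne i n with hE | hnen
    · have hEq := heq i (Finset.mem_Icc.2 ⟨by omega, hi2⟩)
      rw [hE]
      rw [hE] at hEq hne1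
      exact ⟨by rw [hxn', hxn], by rw [hEq, hxn', hxbn]⟩
    · have h2i : 2 ≤ i := by omega
      have hEq := heq i (Finset.mem_Icc.2 ⟨h2i, hi2⟩)
      have hxi := hmid' i h2i (by omega)
      exact ⟨by rw [hxi, hxmid i hnen],
        by rw [hEq, hxi, hxbmid i hne1 hnen]⟩
end
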